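/- Let A be a Hopf R-algebroid in which the antipode S maps primitive elements to primitive elements. Then for every r ∈ R and every primitive X, the element Xr is again primitive; that is, Prim(A) is a right R-submodule of A (equivalently, the (k,R)-Lie algebra Prim(A) has trivial anchor). -/
import Mathlib


open TensorProduct

/-- A (partial) Hopf `R`-algebroid structure on a `k`-algebra `A` containing the commutative
base algebra `R`: `A` is a left `R`-module whose scalar multiplication is left multiplication
by the image of `R` in `A` (via `r ↦ r • 1`), equipped with a left `R`-coalgebra structure
`(comul, counit)` with `counit` restricting to the identity on `R`, and a `k`-linear
involutive antipode `S` restricting to the identity on `R` and reversing products. -/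
structure HopfAlgebroid (k R A : Type*) [Field k] [CommRing R] [Algebra k R] [Ring A]
    [Algebra k A] [Module R A] where
  /-- the `R`-action on `A` is left multiplication by the image of `R` in `A` -/
  smul_eq : ∀ (r : R) (a : A), r • a = (r • (1 : A)) * a
  /-- the comultiplication, with values in `A ⊗_R A` (both left `R`-module structures) -/
  comul : A →ₗ[R] A ⊗[R] A
  /-- the counit, with values in the base algebra `R` -/
  counit : A →ₗ[R] R
  /-- the counit restricts to the identity on `R ⊆ A` -/
  counit_base : ∀ r : R, counit (r • (1 : A)) = r
  /-- left counit axiom of the `R`-coalgebra `A` -/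
  counit_comul : ∀ a : A, TensorProduct.lid R A (LinearMap.rTensor A counit (comul a)) = a
  /-- right counit axiom of the `R`-coalgebra `A` -/
  comul_counit : ∀ a : A, TensorProduct.rid R A (LinearMap.lTensor A counit (comul a)) = a
  /-- coassociativity of the comultiplication -/
  coassoc : ∀ a : A, TensorProduct.assoc R A A A (LinearMap.rTensor A comul (comul a))
    = LinearMap.lTensor A comul (comul a)
  /-- the `k`-linear antipode -/
  antipode : A →ₗ[k] A
  /-- the antipode is an involution -/
  antipode_involutive : ∀ a : A, antipode (antipode a) = a
  /-- the antipode restricts to the identity on `R ⊆ A` -/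
  antipode_base : ∀ r : R, antipode (r • (1 : A)) = r • (1 : A)
  /-- the antipode is an algebra antihomomorphism -/
  antipode_mul : ∀ a b : A, antipode (a * b) = antipode b * antipode a

variable {k R A : Type*} [Field k] [CommRing R] [Algebra k R] [Ring A] [Algebra k A]
  [Module R A]

/-- An element `X` of a Hopf `R`-algebroid is primitive if `Δ(X) = η ⊗ X + X ⊗ η`
for some local unit `η ∈ R` of `X`. -/
def HopfAlgebroid.IsPrimitive (H : HopfAlgebroid k R A) (X : A) : Prop :=
  ∃ η : R, (η • (1 : A)) * X = X ∧ X * (η • (1 : A)) = X ∧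
    H.comul X = (η • (1 : A)) ⊗ₜ[R] X + X ⊗ₜ[R] (η • (1 : A))

theorem HopfAlgebroid.isPrimitive_smul (H : HopfAlgebroid k R A) (r : R) (X : A)
    (hX : H.IsPrimitive X) : H.IsPrimitive (r • X) := by
  obtain ⟨η, h1, h2, h3⟩ := hX
  refine ⟨η, ?_, ?_, ?_⟩
  · rw [← H.smul_eq, smul_comm, H.smul_eq η X, h1]
  · rw [H.smul_eq r X, mul_assoc, h2, ← H.smul_eq]
  · rw [map_smul, h3, smul_add, smul_tmul', smul_tmul', smul_tmul]

/-- If the antipode of a Hopf `R`-algebroid maps primitive elements to primitive elements,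
then the primitive elements form a right `R`-submodule of `A` (equivalently, the
`(k,R)`-Lie algebra of primitives has trivial anchor). -/
theorem primitives_right_submodule_of_antipode_invariant (H : HopfAlgebroid k R A)
    (hS : ∀ X : A, H.IsPrimitive X → H.IsPrimitive (H.antipode X)) :
    ∀ (r : R) (X : A), H.IsPrimitive X → H.IsPrimitive (X * (r • (1 : A))) := by
  intro r X hX
  have hY : H.IsPrimitive (r • H.antipode X) :=
    H.isPrimitive_smul r _ (hS X hX)
  have := hS _ hY
  rwa [H.smul_eq, H.antipode_mul, H.antipode_base, H.antipode_involutive] at this
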